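/- arXiv:2405.11108 — 2 statements merged into one kernel-verified Lean document; each statement's English description precedes it below -/
import Mathlib

section
/- Let a, b ∈ ℂ with b ≠ −1, let j ∈ ℤ with j ≠ 0, and let φ be a ½-derivation of the deformative Schrödinger–Witt algebra 𝒲(a,b,1/2) such that for every m ∈ ℤ the elements φ(L_m) and φ(I_m) lie in the span of {L_{m+j}, I_{m+j}} and φ(Y_m) lies in the span of {Y_{m+j}}. Then φ = 0. -/
/-- Basis of the deformative Schrödinger–Witt algebra 𝒲(a,b,1/2):
`L m`, `I m`, and `Y m` (the latter denotes `Y_{m+1/2}`). -/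
inductive SWBasis : Type
  | L : ℤ → SWBasis
  | I : ℤ → SWBasis
  | Y : ℤ → SWBasis

/-- Underlying vector space of 𝒲(a,b,1/2): the free ℂ-module on `SWBasis`. -/
abbrev SW : Type := SWBasis →₀ ℂ

noncomputable def Lb (m : ℤ) : SW := Finsupp.single (SWBasis.L m) 1
noncomputable def Ib (m : ℤ) : SW := Finsupp.single (SWBasis.I m) 1
noncomputable def Yb (m : ℤ) : SW := Finsupp.single (SWBasis.Y m) 1

/-- The Lie bracket of 𝒲(a,b,1/2) on basis elements. -/
noncomputable def swBracketBasis (a b : ℂ) : SWBasis → SWBasis → SW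
  | SWBasis.L m, SWBasis.L n => ((n : ℂ) - (m : ℂ)) • Lb (m + n)
  | SWBasis.L m, SWBasis.I n => ((n : ℂ) + b * (m : ℂ) + a) • Ib (m + n)
  | SWBasis.I m, SWBasis.L n => -(((m : ℂ) + b * (n : ℂ) + a) • Ib (n + m))
  | SWBasis.L m, SWBasis.Y n =>
      ((n : ℂ) + 1 / 2 + ((b - 1) * (m : ℂ) + a) / 2) • Yb (m + n)
  | SWBasis.Y m, SWBasis.L n =>
      -(((m : ℂ) + 1 / 2 + ((b - 1) * (n : ℂ) + a) / 2) • Yb (n + m))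
  | SWBasis.Y m, SWBasis.Y n => ((n : ℂ) - (m : ℂ)) • Ib (m + n + 1)
  | _, _ => 0

/-- The Lie bracket of 𝒲(a,b,1/2), extended bilinearly from the basis. -/
noncomputable def swBracket (a b : ℂ) : SW →ₗ[ℂ] SW →ₗ[ℂ] SW :=
  Finsupp.lift (SW →ₗ[ℂ] SW) ℂ SWBasis fun x =>
    Finsupp.lift SW ℂ SWBasis fun y => swBracketBasis a b x y

/-- `φ` is a ½-derivation of 𝒲(a,b,1/2). -/
def IsHalfDerivationSW (a b : ℂ) (φ : SW →ₗ[ℂ] SW) : Prop :=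
  ∀ x y : SW, φ (swBracket a b x y) =
    (1 / 2 : ℂ) • (swBracket a b (φ x) y + swBracket a b x (φ y))

lemma swbr (a b : ℂ) (x y : SWBasis) :
    swBracket a b (Finsupp.single x 1) (Finsupp.single y 1) = swBracketBasis a b x y := by
  simp [swBracket, Finsupp.lift_apply, Finsupp.sum_single_index]

lemma brLL (a b : ℂ) (m n : ℤ) : swBracket a b (Lb m) (Lb n) = ((n:ℂ)-(m:ℂ)) • Lb (m+n) := swbr a b _ _
lemma brLI (a b : ℂ) (m n : ℤ) : swBracket a b (Lb m) (Ib n) = ((n:ℂ)+b*m+a) • Ib (m+n) := swbr a b _ _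
lemma brIL (a b : ℂ) (m n : ℤ) : swBracket a b (Ib m) (Lb n) = -(((m:ℂ)+b*n+a) • Ib (n+m)) := swbr a b _ _
lemma brLY (a b : ℂ) (m n : ℤ) : swBracket a b (Lb m) (Yb n) = ((n:ℂ)+1/2+((b-1)*m+a)/2) • Yb (m+n) := swbr a b _ _
lemma brYL (a b : ℂ) (m n : ℤ) : swBracket a b (Yb m) (Lb n) = -(((m:ℂ)+1/2+((b-1)*n+a)/2) • Yb (n+m)) := swbr a b _ _
lemma brYY (a b : ℂ) (m n : ℤ) : swBracket a b (Yb m) (Yb n) = ((n:ℂ)-(m:ℂ)) • Ib (m+n+1) := swbr a b _ _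
lemma brII (a b : ℂ) (m n : ℤ) : swBracket a b (Ib m) (Ib n) = 0 := swbr a b _ _
lemma brIY (a b : ℂ) (m n : ℤ) : swBracket a b (Ib m) (Yb n) = 0 := swbr a b _ _
lemma brYI (a b : ℂ) (m n : ℤ) : swBracket a b (Yb m) (Ib n) = 0 := swbr a b _ _

/-- a homogeneous ½-derivation of 𝒲(a,b,1/2) (b ≠ −1) of
nonzero integer degree j is zero. -/
theorem stmt1 (a b : ℂ) (hb : b ≠ -1) (j : ℤ) (hj : j ≠ 0) (φ : SW →ₗ[ℂ] SW)
    (hφ : IsHalfDerivationSW a b φ)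
    (hL : ∀ m : ℤ, φ (Lb m) ∈ Submodule.span ℂ ({Lb (m + j), Ib (m + j)} : Set SW))
    (hI : ∀ m : ℤ, φ (Ib m) ∈ Submodule.span ℂ ({Lb (m + j), Ib (m + j)} : Set SW))
    (hY : ∀ m : ℤ, φ (Yb m) ∈ Submodule.span ℂ ({Yb (m + j)} : Set SW)) :
    φ = 0 := by
  choose f g hfg using fun m => Submodule.mem_span_pair.mp (hL m)
  choose p q hpq using fun m => Submodule.mem_span_pair.mp (hI m)
  choose y hyc using fun m => Submodule.mem_span_singleton.mp (hY m)
  have hL' : ∀ m, φ (Lb m) = f m • Lb (m+j) + g m • Ib (m+j) := fun m => (hfg m).symm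
  have hI' : ∀ m, φ (Ib m) = p m • Lb (m+j) + q m • Ib (m+j) := fun m => (hpq m).symm
  have hY' : ∀ m, φ (Yb m) = y m • Yb (m+j) := fun m => (hyc m).symm
  -- coefficient equations
  have eqF : ∀ m n : ℤ, 2*((n:ℂ)-m) * f (m+n) = f m * ((n:ℂ)-m-j) + f n * ((n:ℂ)-m+j) := by
    intro m n
    have e := hφ (Lb m) (Lb n)
    rw [brLL, map_smul, hL' m, hL' n, hL' (m+n)] at e
    simp only [map_add, map_smul, LinearMap.add_apply, LinearMap.smul_apply,
      brLL, brLI, brIL, brII] at e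
    simp only [show m+j+n = m+n+j from by ring, show n+(m+j) = m+n+j from by ring,
      show m+(n+j) = m+n+j from by ring] at e
    have := DFunLike.congr_fun e (SWBasis.L (m+n+j))
    simp [Lb, Ib, Finsupp.single_apply] at this
    linear_combination 2 * this
  have eqG : ∀ m n : ℤ, 2*((n:ℂ)-m) * g (m+n) = -(g m * ((m:ℂ)+j+b*n+a)) + g n * ((n:ℂ)+j+b*m+a) := by
    intro m n
    have e := hφ (Lb m) (Lb n)
    rw [brLL, map_smul, hL' m, hL' n, hL' (m+n)] at e
    simp only [map_add, map_smul, LinearMap.add_apply, LinearMap.smul_apply,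
      brLL, brLI, brIL, brII] at e
    simp only [show m+j+n = m+n+j from by ring, show n+(m+j) = m+n+j from by ring,
      show m+(n+j) = m+n+j from by ring] at e
    have := DFunLike.congr_fun e (SWBasis.I (m+n+j))
    simp [Lb, Ib, Finsupp.single_apply] at this
    linear_combination 2 * this
  have eqQ : ∀ m n : ℤ, 2*((n:ℂ)+b*m+a) * q (m+n) =
      f m * ((n:ℂ)+b*((m:ℂ)+j)+a) + q n * ((n:ℂ)+j+b*m+a) := by
    intro m n
    have e := hφ (Lb m) (Ib n)
    rw [brLI, map_smul, hL' m, hI' n, hI' (m+n)] at e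
    simp only [map_add, map_smul, LinearMap.add_apply, LinearMap.smul_apply,
      brLL, brLI, brIL, brII] at e
    simp only [show m+j+n = m+n+j from by ring, show n+(m+j) = m+n+j from by ring,
      show m+(n+j) = m+n+j from by ring] at e
    have := DFunLike.congr_fun e (SWBasis.I (m+n+j))
    simp [Lb, Ib, Finsupp.single_apply] at this
    linear_combination 2 * this
  have eqY : ∀ m n : ℤ, 2*((n:ℂ)+1/2+((b-1)*m+a)/2) * y (m+n) =
      f m * ((n:ℂ)+1/2+((b-1)*((m:ℂ)+j)+a)/2) + y n * ((n:ℂ)+j+1/2+((b-1)*m+a)/2) := by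
    intro m n
    have e := hφ (Lb m) (Yb n)
    rw [brLY, map_smul, hL' m, hY' n, hY' (m+n)] at e
    simp only [map_add, map_smul, LinearMap.add_apply, LinearMap.smul_apply,
      brLY, brIY] at e
    simp only [show m+j+n = m+n+j from by ring, show m+(n+j) = m+n+j from by ring] at e
    have := DFunLike.congr_fun e (SWBasis.Y (m+n+j))
    simp [Yb, Finsupp.single_apply] at this
    linear_combination 2 * this
  have eqQY : ∀ m n : ℤ, 2*((n:ℂ)-m) * q (m+n+1) = y m * ((n:ℂ)-m-j) + y n * ((n:ℂ)-m+j) := by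
    intro m n
    have e := hφ (Yb m) (Yb n)
    rw [brYY, map_smul, hY' m, hY' n, hI' (m+n+1)] at e
    simp only [map_add, map_smul, LinearMap.add_apply, LinearMap.smul_apply, brYY] at e
    simp only [show m+j+n+1 = m+n+1+j from by ring, show m+(n+j)+1 = m+n+1+j from by ring] at e
    have := DFunLike.congr_fun e (SWBasis.I (m+n+1+j))
    simp [Lb, Ib, Finsupp.single_apply] at this
    linear_combination 2 * this
  have eqPY : ∀ m n : ℤ, ((n:ℂ)-m) * p (m+n+1) = 0 := by
    intro m n
    have e := hφ (Yb m) (Yb n)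
    rw [brYY, map_smul, hY' m, hY' n, hI' (m+n+1)] at e
    simp only [map_add, map_smul, LinearMap.add_apply, LinearMap.smul_apply, brYY] at e
    simp only [show m+j+n+1 = m+n+1+j from by ring, show m+(n+j)+1 = m+n+1+j from by ring] at e
    have := DFunLike.congr_fun e (SWBasis.L (m+n+1+j))
    simp [Lb, Ib, Finsupp.single_apply] at this
    rcases this with h | h
    · rw [h, zero_mul]
    · rw [h, mul_zero]
  -- nonzero scalars
  have hjC : (j:ℂ) ≠ 0 := Int.cast_ne_zero.mpr hj
  have hb1 : (1:ℂ) + b ≠ 0 := fun h => hb (by linear_combination h)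
  -- key reduced relations
  have hyR : ∀ x : ℤ, y x * (2*(x:ℂ)+1+a-2*j) = f 0 * (2*(x:ℂ)+1+a+(b-1)*j) := by
    intro x
    have h := eqY 0 x
    simp only [zero_add] at h
    push_cast at h
    linear_combination 2 * h
  have hqR : ∀ x : ℤ, q x * ((x:ℂ)+a-j) = f 0 * ((x:ℂ)+a+b*j) := by
    intro x
    have h := eqQ 0 x
    simp only [zero_add] at h
    push_cast at h
    linear_combination h
  -- f 0 = 0
  have hF : f 0 = 0 := by
    have d1 := eqQY 0 1
    have d2 := eqQY 0 2
    norm_num at d1 d2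
    have hq2 := hqR 2
    have hq3 := hqR 3
    have hy0 := hyR 0
    have hy1 := hyR 1
    have hy2 := hyR 2
    push_cast at hq2 hq3 hy0 hy1 hy2 d1 d2
    have hF1 : f 0 * (2*(j:ℂ)*(1+b)*((j:ℂ)^2-1)) = 0 := by
      linear_combination ((2+a-(j:ℂ))*(1+a-2*j)*(3+a-2*j)) * d1
        - (2*(1+a-2*(j:ℂ))*(3+a-2*j)) * hq2
        + ((1-(j:ℂ))*(2+a-j)*(3+a-2*j)) * hy0
        + ((1+(j:ℂ))*(2+a-j)*(1+a-2*j)) * hy1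
    have hF2 : f 0 * (4*(j:ℂ)*(1+b)*((j:ℂ)^2-4)) = 0 := by
      linear_combination ((3+a-(j:ℂ))*(1+a-2*j)*(5+a-2*j)) * d2
        - (4*(1+a-2*(j:ℂ))*(5+a-2*j)) * hq3
        + ((2-(j:ℂ))*(3+a-j)*(5+a-2*j)) * hy0
        + ((2+(j:ℂ))*(3+a-j)*(1+a-2*j)) * hy2
    have h12 : f 0 * (12*(j:ℂ)*(1+b)) = 0 := by linear_combination 2*hF1 - hF2
    rcases mul_eq_zero.mp h12 with h | h
    · exact h
    · exact absurd h (by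
        intro hc
        rcases mul_eq_zero.mp hc with h' | h'
        · rcases mul_eq_zero.mp h' with h'' | h''
          · norm_num at h''
          · exact hjC h''
        · exact hb1 h')
  -- f ≡ 0
  have fz' : ∀ m : ℤ, m ≠ j → f m = 0 := by
    intro m hm
    have h := eqF m 0
    simp only [add_zero] at h
    push_cast at h
    have hmul : f m * ((j:ℂ) - m) = 0 := by linear_combination h + ((j:ℂ)-(m:ℂ)) * hF
    rcases mul_eq_zero.mp hmul with h' | h'
    · exact h'
    · exact absurd h' (sub_ne_zero_of_ne (fun hc => hm (by exact_mod_cast hc.symm)))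
  have fz : ∀ m : ℤ, f m = 0 := by
    intro m
    by_cases hm : m = j
    · subst hm
      have h := eqF m (-m)
      rw [show m + -m = 0 from by ring] at h
      push_cast at h
      have hmj : f (-m) = 0 := fz' (-m) (by omega)
      have hmul : f m * (3*(m:ℂ)) = 0 := by linear_combination h + 4*(m:ℂ)*hF - (m:ℂ)*hmj
      rcases mul_eq_zero.mp hmul with h' | h'
      · exact h'
      · exact absurd h' (by
          intro hc
          rcases mul_eq_zero.mp hc with h'' | h''
          · norm_num at h''
          · exact hjC h'')
    · exact fz' m hm
  -- y ≡ 0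
  have yz' : ∀ k : ℤ, (2*(k:ℂ)+1+a-2*j ≠ 0) → y k = 0 := by
    intro k hk
    have hmul : y k * (2*(k:ℂ)+1+a-2*j) = 0 := by
      linear_combination hyR k + (2*(k:ℂ)+1+a+(b-1)*j) * (fz 0)
    rcases mul_eq_zero.mp hmul with h' | h'
    · exact h'
    · exact absurd h' hk
  have yz : ∀ k : ℤ, y k = 0 := by
    intro k
    by_cases hk : 2*(k:ℂ)+1+a-2*j = 0
    · have ya : y (k-1) = 0 := by
        refine yz' _ ?_
        intro hc
        push_cast at hc
        have : (2:ℂ) = 0 := by linear_combination hk - hc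
        norm_num at this
      have yb : y (k-2) = 0 := by
        refine yz' _ ?_
        intro hc
        push_cast at hc
        have : (4:ℂ) = 0 := by linear_combination hk - hc
        norm_num at this
      have t1 := eqY 1 (k-1)
      rw [show (1:ℤ) + (k-1) = k from by ring] at t1
      have t2 := eqY 2 (k-2)
      rw [show (2:ℤ) + (k-2) = k from by ring] at t2
      push_cast at t1 t2
      have e1 : ((k:ℂ)-1+1/2+((b-1)+a)/2) * y k = 0 := by
        linear_combination (1/2)*t1 + (1/2)*((k:ℂ)-1+1/2+((b-1)*(1+(j:ℂ))+a)/2) * (fz 1)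
          + (1/2)*((k:ℂ)-1+(j:ℂ)+1/2+((b-1)+a)/2) * ya
      have e2 : ((k:ℂ)-2+1/2+((b-1)*2+a)/2) * y k = 0 := by
        linear_combination (1/2)*t2 + (1/2)*((k:ℂ)-2+1/2+((b-1)*(2+(j:ℂ))+a)/2) * (fz 2)
          + (1/2)*((k:ℂ)-2+(j:ℂ)+1/2+((b-1)*2+a)/2) * yb
      have hmul : y k * (j:ℂ) = 0 := by
        linear_combination 2*e1 - e2 - (y k/2) * hk
      rcases mul_eq_zero.mp hmul with h' | h'
      · exact h'
      · exact absurd h' hjC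
    · exact yz' k hk
  -- q ≡ 0 and p ≡ 0
  have qz : ∀ k : ℤ, q k = 0 := by
    intro k
    have d1 := eqQY (k-1) 0
    rw [show k-1+0+1 = k from by ring, yz (k-1), yz 0] at d1
    have d2 := eqQY (k-2) 1
    rw [show k-2+1+1 = k from by ring, yz (k-2), yz 1] at d2
    push_cast at d1 d2
    linear_combination (1/4)*d2 - (1/4)*d1
  have pz : ∀ k : ℤ, p k = 0 := by
    intro k
    have d1 := eqPY (k-1) 0
    rw [show k-1+0+1 = k from by ring] at d1
    have d2 := eqPY (k-2) 1
    rw [show k-2+1+1 = k from by ring] at d2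
    push_cast at d1 d2
    linear_combination (1/2)*d2 - (1/2)*d1
  -- g ≡ 0
  have hgR : ∀ x : ℤ, g x * ((x:ℂ)-j-a) = -(g 0 * ((j:ℂ)+b*x+a)) := by
    intro x
    have h := eqG 0 x
    simp only [zero_add] at h
    push_cast at h
    linear_combination h
  have cgen : ∀ m n : ℤ, g 0 * ((1+b)*(m:ℂ)*n*((m:ℂ)-n)*(b*((m:ℂ)+n)+(2-b)*(a+j))) = 0 := by
    intro m n
    have h1 := eqG m n
    have h2 := hgR (m+n)
    have h3 := hgR m
    have h4 := hgR n
    push_cast at h1 h2 h3 h4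
    linear_combination (((m:ℂ)-j-a)*((n:ℂ)-j-a)*((m:ℂ)+n-j-a)) * h1
      - (2*((n:ℂ)-m)*((m:ℂ)-j-a)*((n:ℂ)-j-a)) * h2
      - (((m:ℂ)+j+b*n+a)*((n:ℂ)-j-a)*((m:ℂ)+n-j-a)) * h3
      + (((n:ℂ)+j+b*m+a)*((m:ℂ)-j-a)*((m:ℂ)+n-j-a)) * h4
  have g0z : g 0 = 0 := by
    by_cases hb0 : b = 0
    · subst hb0
      by_cases haj : a + (j:ℂ) = 0
      · have hx : ∀ x : ℤ, (x:ℂ) ≠ 0 → g x = 0 := by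
          intro x hx0
          have hmul : g x * (x:ℂ) = 0 := by
            linear_combination hgR x + (g x) * haj - (g 0) * haj
          rcases mul_eq_zero.mp hmul with h' | h'
          · exact h'
          · exact absurd h' hx0
        have h := eqG (-1) 1
        rw [show (-1:ℤ)+1 = 0 from by ring, hx (-1) (by norm_num), hx 1 (by norm_num)] at h
        push_cast at h
        linear_combination (1/4) * h
      · have hc : g 0 * (a+(j:ℂ)) = 0 := by
          have := cgen 1 2
          push_cast at this
          linear_combination (-1/4)*this
        rcases mul_eq_zero.mp hc with h' | h'
        · exact h'
        · exact absurd h' haj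
    · by_cases h3b : 3*b+(2-b)*(a+(j:ℂ)) = 0
      · have hc : g 0 * ((1+b)*b) = 0 := by
          have := cgen 1 3
          push_cast at this
          linear_combination (-1/6)*this - (g 0*(1+b))*h3b
        rcases mul_eq_zero.mp hc with h' | h'
        · exact h'
        · exact absurd h' (mul_ne_zero hb1 hb0)
      · have hc : g 0 * ((1+b)*(3*b+(2-b)*(a+(j:ℂ)))) = 0 := by
          have := cgen 1 2
          push_cast at this
          linear_combination (-1/2)*this
        rcases mul_eq_zero.mp hc with h' | h'
        · exact h'
        · exact absurd h' (mul_ne_zero hb1 h3b)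
  have gz' : ∀ x : ℤ, ((x:ℂ)-j-a ≠ 0) → g x = 0 := by
    intro x hx
    have hmul : g x * ((x:ℂ)-j-a) = 0 := by
      linear_combination hgR x - ((j:ℂ)+b*x+a) * g0z
    rcases mul_eq_zero.mp hmul with h' | h'
    · exact h'
    · exact absurd h' hx
  have gz : ∀ x : ℤ, g x = 0 := by
    intro x
    by_cases hx : (x:ℂ)-j-a = 0
    · have key : ∀ t : ℤ, t ≠ x → g t = 0 := by
        intro t ht
        refine gz' t ?_
        intro hc
        have : (t:ℂ) = (x:ℂ) := by linear_combination hc - hx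
        exact ht (by exact_mod_cast this)
      obtain ⟨mm, hm0, hm1, hm2⟩ : ∃ mm : ℤ, mm ≠ 0 ∧ mm ≠ x ∧ x ≠ 2*mm := by
        by_cases h1 : x = -1
        · exact ⟨-2, by omega, by omega, by omega⟩
        · by_cases h2 : x = -2
          · exact ⟨-3, by omega, by omega, by omega⟩
          · exact ⟨-1, by omega, by omega, by omega⟩
      have h := eqG mm (x-mm)
      rw [show mm+(x-mm) = x from by ring, key mm hm1, key (x-mm) (by omega)] at h
      push_cast at h
      have hmul : g x * ((x:ℂ)-2*mm) = 0 := by linear_combination (1/2)*h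
      rcases mul_eq_zero.mp hmul with h' | h'
      · exact h'
      · refine absurd h' ?_
        have : (x:ℂ) ≠ ((2*mm:ℤ):ℂ) := fun hc => hm2 (Int.cast_injective hc)
        push_cast at this
        exact sub_ne_zero_of_ne this
    · exact gz' x hx
  -- conclude
  have hsingle : ∀ s : SWBasis, φ (Finsupp.single s 1) = 0 := by
    intro s
    cases s with
    | L m => rw [show (Finsupp.single (SWBasis.L m) 1 : SW) = Lb m from rfl, hL' m, fz m, gz m,
        zero_smul, zero_smul, add_zero]
    | I m => rw [show (Finsupp.single (SWBasis.I m) 1 : SW) = Ib m from rfl, hI' m, pz m, qz m,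
        zero_smul, zero_smul, add_zero]
    | Y m => rw [show (Finsupp.single (SWBasis.Y m) 1 : SW) = Yb m from rfl, hY' m, yz m,
        zero_smul]
  refine Finsupp.lhom_ext' fun s => LinearMap.ext fun c => ?_
  simp only [LinearMap.comp_apply, Finsupp.lsingle_apply, LinearMap.zero_apply,
    LinearMap.zero_comp]
  rw [show (Finsupp.single s c : SW) = c • Finsupp.single s 1 from by simp [Finsupp.smul_single],
    map_smul, hsingle, smul_zero]
end

section
/- Let a ∈ ℂ. Let ∗ denote the commutative associative multiplication on the underlying vector space of 𝒲(a,−1,1/2) determined on basis elements by L_i ∗ L_j = L_{i+j}, L_i ∗ I_j = I_{i+j}, L_i ∗ Y_j = Y_{i+j}, Y_i ∗ Y_j = I_{i+j+1}, and I_i ∗ I_j = I_i ∗ Y_j = 0. Then for every element w of this space, the product x·y := (x ∗ w) ∗ y is commutative and associative and satisfies the transposed Poisson compatibility 2·(z·[x,y]) = [z·x, y] + [x, z·y] with respect to the Lie bracket of 𝒲(a,−1,1/2); that is, every such mutation defines a transposed Poisson structure on 𝒲(a,−1,1/2). -/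
/-- The commutative associative multiplication ∗ on the underlying space of
𝒲(a,−1,1/2), on basis elements. -/
noncomputable def swStarBasis : SWBasis → SWBasis → SW
  | SWBasis.L i, SWBasis.L j => Lb (i + j)
  | SWBasis.L i, SWBasis.I j => Ib (i + j)
  | SWBasis.I i, SWBasis.L j => Ib (j + i)
  | SWBasis.L i, SWBasis.Y j => Yb (i + j)
  | SWBasis.Y i, SWBasis.L j => Yb (j + i)
  | SWBasis.Y i, SWBasis.Y j => Ib (i + j + 1)
  | _, _ => 0

/-- The multiplication ∗, extended bilinearly from the basis. -/
noncomputable def swStar : SW →ₗ[ℂ] SW →ₗ[ℂ] SW :=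
  Finsupp.lift (SW →ₗ[ℂ] SW) ℂ SWBasis fun x =>
    Finsupp.lift SW ℂ SWBasis fun y => swStarBasis x y

lemma star_single' (i j : SWBasis) (c d : ℂ) :
    swStar (Finsupp.single i c) (Finsupp.single j d) = (c * d) • swStarBasis i j := by
  simp [swStar, Finsupp.lift_apply, Finsupp.sum_single_index, smul_smul]

lemma bracket_single' (a b : ℂ) (x y : SWBasis) (c d : ℂ) :
    swBracket a b (Finsupp.single x c) (Finsupp.single y d) =
      (c * d) • swBracketBasis a b x y := by
  simp [swBracket, Finsupp.lift_apply, Finsupp.sum_single_index, smul_smul]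

lemma star_basis_comm (i j : SWBasis) : swStarBasis i j = swStarBasis j i := by
  cases i <;> cases j <;> simp [swStarBasis, add_comm]

set_option maxHeartbeats 1000000 in
lemma star_base_assoc (i j k : SWBasis) (c d e : ℂ) :
    swStar (swStar (Finsupp.single i c) (Finsupp.single j d)) (Finsupp.single k e) =
      swStar (Finsupp.single i c) (swStar (Finsupp.single j d) (Finsupp.single k e)) := by
  cases i <;> cases j <;> cases k <;>
    · try simp only [star_single']
      try simp only [swStarBasis, Lb, Ib, Yb]
      try simp only [map_smul, map_zero, LinearMap.smul_apply, LinearMap.zero_apply,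
        smul_zero, smul_smul, one_mul, mul_one]
      try simp only [star_single']
      try simp only [swStarBasis, Lb, Ib, Yb]
      try simp only [smul_zero, smul_smul, one_mul, mul_one]
      try simp only [Finsupp.smul_single, smul_eq_mul, mul_one,
        add_comm, add_left_comm, add_assoc]
      try rfl
      try (congr 1; ring)

set_option maxHeartbeats 2000000 in
lemma half_base (a : ℂ) (i j k : SWBasis) (c d e : ℂ) :
    (2 : ℂ) • swStar (Finsupp.single i c)
        (swBracket a (-1) (Finsupp.single j d) (Finsupp.single k e)) =
      swBracket a (-1) (swStar (Finsupp.single i c) (Finsupp.single j d))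
          (Finsupp.single k e) +
        swBracket a (-1) (Finsupp.single j d)
          (swStar (Finsupp.single i c) (Finsupp.single k e)) := by
  cases i <;> cases j <;> cases k <;>
    · try simp only [star_single', bracket_single']
      try simp only [swStarBasis, swBracketBasis, Lb, Ib, Yb]
      try simp only [map_smul, map_neg, map_zero, LinearMap.smul_apply,
        LinearMap.neg_apply, LinearMap.zero_apply, smul_zero, zero_add, add_zero,
        neg_zero, smul_neg, neg_smul, smul_smul, one_mul, mul_one]
      try simp only [star_single', bracket_single']
      try simp only [swStarBasis, swBracketBasis, Lb, Ib, Yb]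
      try simp only [smul_zero, zero_add, add_zero, neg_zero, smul_neg, neg_smul,
        smul_smul, one_mul, mul_one]
      try simp only [Finsupp.smul_single, smul_eq_mul, mul_one, ← Finsupp.single_add,
        ← Finsupp.single_neg, add_comm, add_left_comm, add_assoc]
      try rfl
      try (congr 1; push_cast; ring)

lemma star_comm (x y : SW) : swStar x y = swStar y x := by
  induction x using Finsupp.induction_linear with
  | zero => simp
  | add f g hf hg => simp [map_add, LinearMap.add_apply, hf, hg]
  | single i c =>
    induction y using Finsupp.induction_linear with
    | zero => simp
    | add f g hf hg => simp [map_add, LinearMap.add_apply, hf, hg]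
    | single j d =>
      rw [star_single', star_single', star_basis_comm i j, mul_comm]

lemma star_assoc (x y z : SW) :
    swStar (swStar x y) z = swStar x (swStar y z) := by
  induction x using Finsupp.induction_linear with
  | zero => simp
  | add f g hf hg => simp [map_add, LinearMap.add_apply, hf, hg]
  | single i c =>
    induction y using Finsupp.induction_linear with
    | zero => simp
    | add f g hf hg => simp [map_add, LinearMap.add_apply, hf, hg]
    | single j d =>
      induction z using Finsupp.induction_linear with
      | zero => simp
      | add f g hf hg => simp [map_add, LinearMap.add_apply, hf, hg]
      | single k e => exact star_base_assoc i j k c d e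

lemma half_der (a : ℂ) (u x y : SW) :
    (2 : ℂ) • swStar u (swBracket a (-1) x y) =
      swBracket a (-1) (swStar u x) y + swBracket a (-1) x (swStar u y) := by
  induction u using Finsupp.induction_linear with
  | zero => simp
  | add f g hf hg =>
    simp only [map_add, LinearMap.add_apply, smul_add, hf, hg]; abel
  | single i c =>
    induction x using Finsupp.induction_linear with
    | zero => simp
    | add f g hf hg =>
      simp only [map_add, LinearMap.add_apply, smul_add, hf, hg]; abel
    | single j d =>
      induction y using Finsupp.induction_linear with
      | zero => simp
      | add f g hf hg =>
        simp only [map_add, LinearMap.add_apply, smul_add, hf, hg]; abel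
      | single k e => exact half_base a i j k c d e

/-- every mutation x·y := (x ∗ w) ∗ y of the algebra (SW, ∗) is a
commutative associative multiplication satisfying the transposed Poisson
compatibility with the Lie bracket of 𝒲(a,−1,1/2). -/
theorem stmt6 (a : ℂ) (w : SW) :
    (∀ x y : SW, swStar (swStar x w) y = swStar (swStar y w) x) ∧
    (∀ x y z : SW,
      swStar (swStar (swStar (swStar x w) y) w) z =
        swStar (swStar x w) (swStar (swStar y w) z)) ∧
    (∀ x y z : SW,
      (2 : ℂ) • swStar (swStar z w) (swBracket a (-1) x y) =
        swBracket a (-1) (swStar (swStar z w) x) y +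
          swBracket a (-1) x (swStar (swStar z w) y)) := by
  
  refine ⟨fun x y => ?_, fun x y z => ?_, fun x y z => half_der a (swStar z w) x y⟩
  · rw [star_comm (swStar x w) y, star_comm x w, ← star_assoc]
  · rw [star_assoc (swStar (swStar x w) y) w z,
      star_assoc (swStar x w) y (swStar w z), ← star_assoc y w z]
end
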